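/- Let J ≥ 1, α : Fin J → ℝ, cost functions C_j : ℝ → ℝ, and let r* : Fin J → ℝ be defined by r*_J = C_J(α_J) and r*_j = r*_{j+1} + C_j(α_j) − C_j(α_{j+1}) for j < J. Define the information rent of type j as U*_j = r*_j − C_j(α_j). Then U*_J = 0 and, for j < J, U*_j = ∑_{m=j+1}^{J} (C_m(α_m) − C_{m−1}(α_m)). Moreover, if C_m(α_m) ≥ C_{m−1}(α_m) for every m ∈ {2,…,J}, then U*_j ≥ 0 for all j and U*_j is nonincreasing in j (U*_j ≥ U*_{j+1} for all j < J); thus all types except type J receive positive information rent whenever these inequalities are strict. -/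
import Mathlib


/-- Information rents under the optimal contract: type J earns zero, the rents
have a closed form, are nonnegative and nonincreasing when adjacent cost
differences are nonnegative, and are strictly positive for all types except
type J when those differences are strict. -/
theorem information_rent_properties
    (J : ℕ) (hJ : 1 ≤ J) (α : Fin J → ℝ) (C : Fin J → ℝ → ℝ)
    (rstar : Fin J → ℝ)
    (hlast : rstar ⟨J - 1, by omega⟩ = C ⟨J - 1, by omega⟩ (α ⟨J - 1, by omega⟩))
    (hrec : ∀ (j : ℕ) (h : j + 1 < J),
      rstar ⟨j, Nat.lt_of_succ_lt h⟩ =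
        rstar ⟨j + 1, h⟩
          + C ⟨j, Nat.lt_of_succ_lt h⟩ (α ⟨j, Nat.lt_of_succ_lt h⟩)
          - C ⟨j, Nat.lt_of_succ_lt h⟩ (α ⟨j + 1, h⟩))
    (Ustar : Fin J → ℝ) (hUstar : ∀ j : Fin J, Ustar j = rstar j - C j (α j)) :
    Ustar ⟨J - 1, by omega⟩ = 0 ∧
    (∀ (j : ℕ) (h : j + 1 < J),
      Ustar ⟨j, Nat.lt_of_succ_lt h⟩ =
        ∑ m ∈ Finset.univ.filter (fun m : Fin J => j < m.val),
          (C m (α m)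
            - C ⟨m.val - 1, Nat.lt_of_le_of_lt (Nat.sub_le m.val 1) m.isLt⟩ (α m))) ∧
    ((∀ m : Fin J, 1 ≤ m.val →
        C ⟨m.val - 1, Nat.lt_of_le_of_lt (Nat.sub_le m.val 1) m.isLt⟩ (α m) ≤ C m (α m)) →
      (∀ j : Fin J, 0 ≤ Ustar j) ∧
      (∀ (j : ℕ) (h : j + 1 < J), Ustar ⟨j + 1, h⟩ ≤ Ustar ⟨j, Nat.lt_of_succ_lt h⟩)) ∧
    ((∀ m : Fin J, 1 ≤ m.val →
        C ⟨m.val - 1, Nat.lt_of_le_of_lt (Nat.sub_le m.val 1) m.isLt⟩ (α m) < C m (α m)) →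
      ∀ j : Fin J, j.val + 1 < J → 0 < Ustar j) := by
  set term : Fin J → ℝ := fun m =>
      C m (α m) - C ⟨m.val - 1, Nat.lt_of_le_of_lt (Nat.sub_le m.val 1) m.isLt⟩ (α m)
    with hterm
  set S : ℕ → ℝ := fun j => ∑ m ∈ Finset.univ.filter (fun m : Fin J => j < m.val), term m
    with hS
  have hUlast : Ustar ⟨J - 1, by omega⟩ = 0 := by
    rw [hUstar, hlast]; ring
  have hfilter : ∀ (j : ℕ) (h : j + 1 < J),
      Finset.univ.filter (fun m : Fin J => j < m.val)
        = insert ⟨j + 1, h⟩ (Finset.univ.filter (fun m : Fin J => j + 1 < m.val)) := by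
    intro j h
    ext m
    simp only [Finset.mem_filter, Finset.mem_univ, Finset.mem_insert, true_and,
      Fin.ext_iff]
    omega
  have hSstep : ∀ (j : ℕ) (h : j + 1 < J),
      S j = term ⟨j + 1, h⟩ + S (j + 1) := by
    intro j h
    simp only [hS, hfilter j h]
    rw [Finset.sum_insert (by simp)]
  have hCprev : ∀ (j : ℕ) (h : j + 1 < J),
      C ⟨(⟨j + 1, h⟩ : Fin J).val - 1,
          Nat.lt_of_le_of_lt (Nat.sub_le _ 1) (Fin.isLt _)⟩
        = C ⟨j, Nat.lt_of_succ_lt h⟩ := by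
    intro j h
    congr 1
  have hUstep : ∀ (j : ℕ) (h : j + 1 < J),
      Ustar ⟨j, Nat.lt_of_succ_lt h⟩ = term ⟨j + 1, h⟩ + Ustar ⟨j + 1, h⟩ := by
    intro j h
    rw [hUstar, hUstar, hrec j h, hterm]
    simp only
    have e : C ⟨j + 1 - 1, Nat.lt_of_le_of_lt (Nat.sub_le _ 1) h⟩ (α ⟨j + 1, h⟩)
        = C ⟨j, Nat.lt_of_succ_lt h⟩ (α ⟨j + 1, h⟩) := by
      congr 1
    rw [e]
    ring
  have key : ∀ (d j : ℕ), j + d = J - 1 → ∀ hj : j < J, Ustar ⟨j, hj⟩ = S j := by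
    intro d
    induction d with
    | zero =>
      intro j hjd hj
      have hj' : j = J - 1 := by omega
      subst hj'
      rw [hUlast, hS]
      have : Finset.univ.filter (fun m : Fin J => J - 1 < m.val) = ∅ := by
        ext m; simp only [Finset.mem_filter, Finset.mem_univ, true_and,
          Finset.notMem_empty, iff_false]
        omega
      simp [this]
    | succ d ih =>
      intro j hjd hj
      have h : j + 1 < J := by omega
      rw [hUstep j h, ih (j + 1) (by omega) h, hSstep j h]
  have keyall : ∀ (j : ℕ) (hj : j < J), Ustar ⟨j, hj⟩ = S j := by
    intro j hj
    exact key (J - 1 - j) j (by omega) hj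
  have htermpos : ∀ (hyp : ∀ m : Fin J, 1 ≤ m.val →
      C ⟨m.val - 1, Nat.lt_of_le_of_lt (Nat.sub_le m.val 1) m.isLt⟩ (α m) ≤ C m (α m)),
      ∀ m : Fin J, 1 ≤ m.val → 0 ≤ term m := by
    intro hyp m hm
    have := hyp m hm
    simp only [hterm]
    linarith
  refine ⟨hUlast, ?_, ?_, ?_⟩
  · intro j h
    exact keyall j (Nat.lt_of_succ_lt h)
  · intro hyp
    constructor
    · intro j
      have := keyall j.val j.isLt
      rw [show (⟨j.val, j.isLt⟩ : Fin J) = j from rfl] at this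
      rw [this, hS]
      apply Finset.sum_nonneg
      intro m hm
      simp only [Finset.mem_filter, Finset.mem_univ, true_and] at hm
      exact htermpos hyp m (by omega)
    · intro j h
      rw [hUstep j h]
      have : 0 ≤ term ⟨j + 1, h⟩ := htermpos hyp ⟨j + 1, h⟩ (by simp)
      linarith
  · intro hyp j hjlt
    have := keyall j.val j.isLt
    rw [show (⟨j.val, j.isLt⟩ : Fin J) = j from rfl] at this
    rw [this, hS]
    apply Finset.sum_pos
    · intro m hm
      simp only [Finset.mem_filter, Finset.mem_univ, true_and] at hm
      have := hyp m (by omega)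
      simp only [hterm]; linarith
    · refine ⟨⟨j.val + 1, hjlt⟩, ?_⟩
      simp only [Finset.mem_filter, Finset.mem_univ, true_and, Fin.val_mk]
      omega
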